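/- arXiv:2602.00144 — 2 statements merged into one kernel-verified Lean document; each statement's English description precedes it below -/
import Mathlib

section
/- Let k₁,…,k_N, z ∈ ℝ^d be unit vectors, τ > 0, and pᵢ = exp(kᵢᵀz/τ)/Σⱼ exp(kⱼᵀz/τ). Then Σᵢ pᵢ ‖kᵢ − z‖ ≤ minᵢ ‖kᵢ − z‖ + √(2τ log N). -/
/-!
For unit vectors `‖kᵢ - z‖² = 2 - 2⟪kᵢ, z⟫`, so the softmax weights are a Gibbs distribution for
the energies `‖kᵢ - z‖²` at temperature `2τ`. Since the entropy of a distribution on `N` points is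
at most `log N`, the Gibbs average of the energies exceeds their minimum by at most `2τ log N`.
Jensen's inequality turns this second-moment bound into
`∑ pᵢ ‖kᵢ - z‖ ≤ √(min² + 2τ log N) ≤ min + √(2τ log N)`.
-/

open Finset
open scoped RealInnerProductSpace

noncomputable def softmax {ι : Type*} [Fintype ι] (s : ι → ℝ) (i : ι) : ℝ :=
  Real.exp (s i) / ∑ j, Real.exp (s j)

section Softmax

variable {ι : Type*} [Fintype ι] (s : ι → ℝ)

lemma sum_exp_pos [Nonempty ι] : 0 < ∑ j, Real.exp (s j) :=
  Finset.sum_pos (fun j _ => Real.exp_pos (s j)) univ_nonempty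

lemma softmax_pos (i : ι) : 0 < softmax s i :=
  have : Nonempty ι := ⟨i⟩
  div_pos (Real.exp_pos _) (sum_exp_pos s)

lemma sum_softmax [Nonempty ι] : ∑ i, softmax s i = 1 := by
  simp only [softmax, ← Finset.sum_div, div_self (sum_exp_pos s).ne']

lemma log_inv_softmax (i : ι) :
    Real.log (softmax s i)⁻¹ = Real.log (∑ j, Real.exp (s j)) - s i := by
  have : Nonempty ι := ⟨i⟩
  rw [softmax, inv_div, Real.log_div (sum_exp_pos s).ne' (Real.exp_pos _).ne', Real.log_exp]

/-- `log ∑ exp sⱼ - ∑ pᵢ sᵢ` is the entropy `∑ pᵢ log pᵢ⁻¹` of `p = softmax s`, which Jensen's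
inequality for `log` bounds by `log (card ι)`. -/
lemma log_sum_exp_le_sum_softmax_mul_add_log_card [Nonempty ι] :
    Real.log (∑ j, Real.exp (s j)) ≤ ∑ i, softmax s i * s i + Real.log (Fintype.card ι) := by
  have jensen := strictConcaveOn_log_Ioi.concaveOn.le_map_sum (t := univ)
    (p := fun i => (softmax s i)⁻¹) (fun i _ => (softmax_pos s i).le) (sum_softmax s)
    (fun i _ => inv_pos.mpr (softmax_pos s i))
  have hcard : ∑ i, softmax s i * (softmax s i)⁻¹ = Fintype.card ι := by
    simp [mul_inv_cancel₀ (softmax_pos s _).ne']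
  simp only [smul_eq_mul, log_inv_softmax, hcard] at jensen
  calc Real.log (∑ j, Real.exp (s j))
      = ∑ i, softmax s i * s i + ∑ i, softmax s i * (Real.log (∑ j, Real.exp (s j)) - s i) := by
        simp only [mul_sub, Finset.sum_sub_distrib, ← Finset.sum_mul, sum_softmax, one_mul]
        ring
    _ ≤ ∑ i, softmax s i * s i + Real.log (Fintype.card ι) := by gcongr

lemma le_sum_softmax_mul_add_log_card (i : ι) :
    s i ≤ ∑ j, softmax s j * s j + Real.log (Fintype.card ι) := by
  have : Nonempty ι := ⟨i⟩
  calc s i = Real.log (Real.exp (s i)) := (Real.log_exp _).symm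
    _ ≤ Real.log (∑ j, Real.exp (s j)) :=
        Real.log_le_log (Real.exp_pos _)
          (Finset.single_le_sum (fun j _ => (Real.exp_pos (s j)).le) (mem_univ i))
    _ ≤ _ := log_sum_exp_le_sum_softmax_mul_add_log_card s

end Softmax

lemma Finset.sq_sum_mul_le_sum_mul_sq {ι R : Type*} [CommSemiring R] [LinearOrder R]
    [IsStrictOrderedRing R] [ExistsAddOfLE R] (t : Finset ι) {w : ι → R} (x : ι → R)
    (hw : ∀ i ∈ t, 0 ≤ w i) (hw₁ : ∑ i ∈ t, w i = 1) :
    (∑ i ∈ t, w i * x i) ^ 2 ≤ ∑ i ∈ t, w i * x i ^ 2 := by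
  simpa [hw₁] using Finset.sum_sq_le_sum_mul_sum_of_sq_le_mul t hw
    (fun i hi => mul_nonneg (hw i hi) (sq_nonneg (x i))) (fun i _ => le_of_eq (by ring))

lemma norm_sub_sq_eq_two_sub_two_inner {E : Type*} [NormedAddCommGroup E] [InnerProductSpace ℝ E]
    {x y : E} (hx : ‖x‖ = 1) (hy : ‖y‖ = 1) : ‖x - y‖ ^ 2 = 2 - 2 * ⟪x, y⟫ := by
  rw [norm_sub_sq_real, hx, hy]
  ring

lemma sum_softmax_mul_norm_sub_sq_le {ι E : Type*} [Fintype ι] [NormedAddCommGroup E]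
    [InnerProductSpace ℝ E] {k : ι → E} {z : E} (hk : ∀ i, ‖k i‖ = 1) (hz : ‖z‖ = 1)
    {τ : ℝ} (hτ : 0 < τ) (i₀ : ι) :
    ∑ i, softmax (fun i => ⟪k i, z⟫ / τ) i * ‖k i - z‖ ^ 2 ≤
      ‖k i₀ - z‖ ^ 2 + 2 * τ * Real.log (Fintype.card ι) := by
  have : Nonempty ι := ⟨i₀⟩
  set s : ι → ℝ := fun i => ⟪k i, z⟫ / τ
  have henergy : ∀ i, ‖k i - z‖ ^ 2 = 2 - 2 * τ * s i := fun i => by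
    rw [norm_sub_sq_eq_two_sub_two_inner (hk i) hz, mul_assoc, mul_div_cancel₀ _ hτ.ne']
  have hterm : ∀ i, softmax s i * ‖k i - z‖ ^ 2 = 2 * softmax s i - 2 * τ * (softmax s i * s i) :=
    fun i => by rw [henergy]; ring
  have hmean : ∑ i, softmax s i * ‖k i - z‖ ^ 2 = 2 - 2 * τ * ∑ i, softmax s i * s i := by
    simp only [hterm, Finset.sum_sub_distrib, ← Finset.mul_sum, sum_softmax, mul_one]
  rw [hmean, henergy i₀]
  nlinarith [le_sum_softmax_mul_add_log_card s i₀]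

lemma le_add_sqrt_of_sq_le_sq_add {x a c : ℝ} (ha : 0 ≤ a) (hc : 0 ≤ c) (h : x ^ 2 ≤ a ^ 2 + c) :
    x ≤ a + Real.sqrt c := by
  refine (abs_le_of_sq_le_sq' ?_ (by positivity)).2
  nlinarith [Real.sq_sqrt hc, Real.sqrt_nonneg c]

theorem hopdc_softmax_distance_bound {d N : ℕ} (hN : 0 < N)
    (k : Fin N → EuclideanSpace ℝ (Fin d)) (z : EuclideanSpace ℝ (Fin d))
    (hk : ∀ i, ‖k i‖ = 1) (hz : ‖z‖ = 1)
    (τ : ℝ) (hτ : 0 < τ)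
    (p : Fin N → ℝ)
    (hp : ∀ i, p i = Real.exp (⟪k i, z⟫ / τ) / ∑ j, Real.exp (⟪k j, z⟫ / τ)) :
    ∑ i, p i * ‖k i - z‖ ≤
      (Finset.univ.inf' (Finset.univ_nonempty_iff.mpr ⟨⟨0, hN⟩⟩)
        (fun i => ‖k i - z‖)) + Real.sqrt (2 * τ * Real.log N) := by
  obtain ⟨i₀, -, hmin⟩ := Finset.exists_mem_eq_inf' (Finset.univ_nonempty_iff.mpr ⟨⟨0, hN⟩⟩)
    (fun i => ‖k i - z‖)
  have hsoftmax : p = softmax (fun i => ⟪k i, z⟫ / τ) := funext hp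
  subst hsoftmax
  have : Nonempty (Fin N) := ⟨i₀⟩
  rw [hmin]
  refine le_add_sqrt_of_sq_le_sq_add (norm_nonneg _)
    (mul_nonneg (by positivity) (Real.log_natCast_nonneg N)) ?_
  calc (∑ i, softmax _ i * ‖k i - z‖) ^ 2
      ≤ ∑ i, softmax _ i * ‖k i - z‖ ^ 2 :=
        univ.sq_sum_mul_le_sum_mul_sq _ (fun i _ => (softmax_pos _ i).le) (sum_softmax _)
    _ ≤ ‖k i₀ - z‖ ^ 2 + 2 * τ * Real.log N := by
        simpa using sum_softmax_mul_norm_sub_sq_le hk hz hτ i₀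
end

section
/- Let δ : ℝ^d → ℝ^d, let k₁,…,k_N, z ∈ ℝ^d be unit vectors, τ > 0, pᵢ = exp(kᵢᵀz/τ)/Σⱼ exp(kⱼᵀz/τ), and suppose ‖δ(kᵢ) − δ(z)‖ ≤ L‖kᵢ − z‖ for all i. Then ‖Σᵢ pᵢ δ(kᵢ) − δ(z)‖ ≤ L (minᵢ ‖kᵢ − z‖ + √(2τ log N)). -/
open Finset
open scoped RealInnerProductSpace

theorem hopdc_temperature_error_bound {d N : ℕ} (hN : 0 < N)
    (δ : EuclideanSpace ℝ (Fin d) → EuclideanSpace ℝ (Fin d))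
    (k : Fin N → EuclideanSpace ℝ (Fin d)) (z : EuclideanSpace ℝ (Fin d))
    (hk : ∀ i, ‖k i‖ = 1) (hz : ‖z‖ = 1)
    (τ : ℝ) (hτ : 0 < τ)
    (p : Fin N → ℝ)
    (hp : ∀ i, p i = Real.exp (⟪k i, z⟫ / τ) / ∑ j, Real.exp (⟪k j, z⟫ / τ))
    (L : ℝ) (hL : 0 ≤ L)
    (hLip : ∀ i, ‖δ (k i) - δ z‖ ≤ L * ‖k i - z‖) :
    ‖(∑ i, p i • δ (k i)) - δ z‖ ≤
      L * ((Finset.univ.inf' (Finset.univ_nonempty_iff.mpr ⟨⟨0, hN⟩⟩)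
        (fun i => ‖k i - z‖)) + Real.sqrt (2 * τ * Real.log N)) := by
  have hNe : (Finset.univ : Finset (Fin N)).Nonempty := Finset.univ_nonempty_iff.mpr ⟨⟨0, hN⟩⟩
  set dd : Fin N → ℝ := fun i => ‖k i - z‖ with hdd
  set m : ℝ := Finset.univ.inf' (Finset.univ_nonempty_iff.mpr ⟨⟨0, hN⟩⟩) (fun i => ‖k i - z‖) with hmdef
  set E : Fin N → ℝ := fun i => Real.exp (-(dd i)^2 / (2*τ)) with hE
  set Z : ℝ := ∑ j, E j with hZ
  have hEpos : ∀ i, 0 < E i := fun i => Real.exp_pos _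
  have hZpos : 0 < Z := Finset.sum_pos (fun i _ => hEpos i) hNe
  -- inner product rewrite
  have hinner : ∀ i, Real.exp (⟪k i, z⟫ / τ) = Real.exp (1/τ) * E i := by
    intro i
    have h1 : ⟪k i, z⟫ = 1 - (dd i)^2 / 2 := by
      have h2 := norm_sub_sq_real (k i) z
      rw [hk i, hz] at h2
      simp only [hdd]
      nlinarith [h2]
    rw [h1, hE, ← Real.exp_add]
    congr 1
    field_simp
    ring
  have hpE : ∀ i, p i = E i / Z := by
    intro i
    rw [hp i]
    have : (∑ j, Real.exp (⟪k j, z⟫ / τ)) = Real.exp (1/τ) * Z := by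
      rw [hZ, Finset.mul_sum]
      exact Finset.sum_congr rfl fun j _ => hinner j
    rw [this, hinner i, mul_div_mul_left _ _ (Real.exp_ne_zero _)]
  have hppos : ∀ i, 0 < p i := fun i => by rw [hpE i]; positivity
  have hpsum : ∑ i, p i = 1 := by
    simp only [hpE]
    rw [← Finset.sum_div, ← hZ, div_self hZpos.ne']
  have hlogp : ∀ i, Real.log (p i) = -(dd i)^2 / (2*τ) - Real.log Z := by
    intro i
    rw [hpE i, Real.log_div (hEpos i).ne' hZpos.ne', hE, Real.log_exp]
  have hNpos : (0:ℝ) < N := by exact_mod_cast hN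
  -- entropy bound: ∑ p i * (- log (p i)) ≤ log N
  have hent : ∑ i, p i * (- Real.log (p i)) ≤ Real.log N := by
    have key : ∀ i, p i * (- Real.log (p i)) - (Real.log N) * p i ≤ 1/N - p i := by
      intro i
      have hx : (0:ℝ) < 1 / (N * p i) := by have := hppos i; positivity
      have h1 := Real.log_le_sub_one_of_pos hx
      have h2 : Real.log (1 / (N * p i)) = -(Real.log N + Real.log (p i)) := by
        rw [Real.log_div one_ne_zero (by have := hppos i; positivity), Real.log_one,
          Real.log_mul hNpos.ne' (hppos i).ne']
        ring
      rw [h2] at h1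
      have h3 : p i * (-(Real.log N + Real.log (p i))) ≤ p i * (1 / (N * p i) - 1) :=
        mul_le_mul_of_nonneg_left h1 (hppos i).le
      have h4 : p i * (1 / (N * p i) - 1) = 1/N - p i := by
        have hpne : p i ≠ 0 := (hppos i).ne'
        field_simp
      nlinarith [h3, h4]
    have hsum := Finset.sum_le_sum (fun i (_ : i ∈ Finset.univ) => key i)
    rw [Finset.sum_sub_distrib, ← Finset.mul_sum, hpsum, Finset.sum_sub_distrib, hpsum] at hsum
    have : ∑ _i : Fin N, (1:ℝ)/N = 1 := by
      rw [Finset.sum_const, Finset.card_univ, Fintype.card_fin, nsmul_eq_mul]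
      field_simp
    rw [this] at hsum
    linarith
  -- m properties
  have hm0 : 0 ≤ m := Finset.le_inf' _ _ (fun i _ => norm_nonneg _)
  obtain ⟨i₀, -, hi₀⟩ := Finset.exists_mem_eq_inf' hNe (fun i => ‖k i - z‖)
  have hmle : ∀ i, m ≤ dd i := fun i => Finset.inf'_le _ (Finset.mem_univ i)
  -- log Z ≥ -m²/(2τ)
  have hlogZ : -(m^2) / (2*τ) ≤ Real.log Z := by
    rw [← Real.log_exp (-(m^2)/(2*τ))]
    apply Real.log_le_log (Real.exp_pos _)
    have : Real.exp (-(m^2)/(2*τ)) = E i₀ := by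
      rw [hE]; congr 2
      rw [hmdef, hi₀]
    rw [this]
    exact Finset.single_le_sum (fun i _ => (hEpos i).le) (Finset.mem_univ i₀)
  -- second moment bound
  have hS2 : ∑ i, p i * (dd i)^2 ≤ m^2 + 2*τ*Real.log N := by
    have heq : ∀ i, p i * (dd i)^2 = 2*τ * (p i * (- Real.log (p i))) - 2*τ*(Real.log Z) * p i := by
      intro i
      have := hlogp i
      have hd2 : (dd i)^2 = 2*τ*(- Real.log (p i) - Real.log Z) := by
        field_simp at this ⊢
        nlinarith [this]
      rw [hd2]; ring
    rw [Finset.sum_congr rfl (fun i _ => heq i), Finset.sum_sub_distrib, ← Finset.mul_sum,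
      ← Finset.mul_sum, hpsum, mul_one]
    have h1 : 2*τ * (∑ i, p i * (- Real.log (p i))) ≤ 2*τ*Real.log N :=
      mul_le_mul_of_nonneg_left hent (by linarith)
    have h2 : -(2*τ*Real.log Z) ≤ m^2 := by
      have := (div_le_iff₀ (by linarith : (0:ℝ) < 2*τ)).mp hlogZ
      linarith
    linarith
  -- Cauchy–Schwarz: (∑ p d)² ≤ ∑ p d²
  have hpd_nonneg : 0 ≤ ∑ i, p i * dd i :=
    Finset.sum_nonneg fun i _ => mul_nonneg (hppos i).le (norm_nonneg _)
  have hCS : (∑ i, p i * dd i)^2 ≤ ∑ i, p i * (dd i)^2 := by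
    have h := Finset.sum_mul_sq_le_sq_mul_sq Finset.univ
      (fun i => Real.sqrt (p i)) (fun i => Real.sqrt (p i) * dd i)
    have e1 : ∀ i : Fin N, Real.sqrt (p i) * (Real.sqrt (p i) * dd i) = p i * dd i := by
      intro i
      rw [← mul_assoc, Real.mul_self_sqrt (hppos i).le]
    have e2 : ∀ i : Fin N, Real.sqrt (p i) ^ 2 = p i := fun i => Real.sq_sqrt (hppos i).le
    have e3 : ∀ i : Fin N, (Real.sqrt (p i) * dd i) ^ 2 = p i * (dd i)^2 := by
      intro i
      rw [mul_pow, e2 i]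
    simp only [e1, e2, e3] at h
    rw [hpsum, one_mul] at h
    exact h
  -- final sqrt algebra
  set a : ℝ := Real.sqrt (2*τ*Real.log N) with ha
  have hlogN : 0 ≤ Real.log N := Real.log_nonneg (by exact_mod_cast hN)
  have ha0 : 0 ≤ a := Real.sqrt_nonneg _
  have hpd : ∑ i, p i * dd i ≤ m + a := by
    have h1 : (∑ i, p i * dd i)^2 ≤ (m+a)^2 := by
      have ha2 : a^2 = 2*τ*Real.log N := Real.sq_sqrt (by positivity)
      nlinarith [hCS, hS2]
    nlinarith [h1, hpd_nonneg, hm0, ha0]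
  -- Lipschitz step
  have hrw : (∑ i, p i • δ (k i)) - δ z = ∑ i, p i • (δ (k i) - δ z) := by
    simp only [smul_sub, Finset.sum_sub_distrib, ← Finset.sum_smul, hpsum, one_smul]
  rw [hrw]
  calc ‖∑ i, p i • (δ (k i) - δ z)‖ ≤ ∑ i, ‖p i • (δ (k i) - δ z)‖ :=
        norm_sum_le _ _
    _ ≤ ∑ i, p i * (L * dd i) := by
        apply Finset.sum_le_sum
        intro i _
        rw [norm_smul, Real.norm_eq_abs, abs_of_pos (hppos i)]
        exact mul_le_mul_of_nonneg_left (hLip i) (hppos i).le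
    _ = L * ∑ i, p i * dd i := by rw [Finset.mul_sum]; exact Finset.sum_congr rfl fun i _ => by ring
    _ ≤ L * (m + a) := mul_le_mul_of_nonneg_left hpd hL
end
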